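/- arXiv:2410.10040 — 4 statements merged into one kernel-verified Lean document; each statement's English description precedes it below -/
import Mathlib

section
/- Assume m¹, m² : [0,α] → [0,∞), that U : [0,α] → ℝ is convex and differentiable on (0,α) with derivative U′, and let λ ≥ 0. If ρ ∈ (0,α)^N and ρⁿ ∈ [0,α]^N satisfy H(λ,ρ) = ρⁿ, then E[ρ] ≤ E[ρⁿ]; more precisely, E[ρⁿ] − E[ρ] ≥ λ·Δt·Δx·Σ_{i=1}^{N−1} ( m¹(ρ_i)m²(ρ_{i+1})·(max(v_{i+1/2}(ρ),0))² + m¹(ρ_{i+1})m²(ρ_i)·(min(v_{i+1/2}(ρ),0))² ). -/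
open Set Finset

/-- Velocity v_{k+1/2} at the interface between cells k and k+1 (0-based). -/
noncomputable def vel (N : ℕ) (Δx : ℝ) (V : Fin N → ℝ) (U' : ℝ → ℝ)
    (ρ : Fin N → ℝ) (k : ℕ) : ℝ :=
  if h : k + 1 < N then
    -(((U' (ρ ⟨k + 1, h⟩) + V ⟨k + 1, h⟩) -
        (U' (ρ ⟨k, Nat.lt_of_succ_lt h⟩) + V ⟨k, Nat.lt_of_succ_lt h⟩)) / Δx)
  else 0

/-- Upwind numerical flux F_{k+1/2} at the interface between cells k and k+1
(0-based), with the no-flux convention at the boundary. -/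
noncomputable def numFlux (N : ℕ) (Δx : ℝ) (V : Fin N → ℝ) (m1 m2 U' : ℝ → ℝ)
    (ρ : Fin N → ℝ) (k : ℕ) : ℝ :=
  if h : k + 1 < N then
    m1 (ρ ⟨k, Nat.lt_of_succ_lt h⟩) * m2 (ρ ⟨k + 1, h⟩) *
        max (vel N Δx V U' ρ k) 0 +
      m1 (ρ ⟨k + 1, h⟩) * m2 (ρ ⟨k, Nat.lt_of_succ_lt h⟩) *
        min (vel N Δx V U' ρ k) 0
  else 0

/-- One implicit Euler step map H_i(λ, ρ) = ρ_i + λ(Δt/Δx)(F_{i+1/2} − F_{i−1/2}). -/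
noncomputable def Hmap (N : ℕ) (Δx Δt : ℝ) (V : Fin N → ℝ) (m1 m2 U' : ℝ → ℝ)
    (lam : ℝ) (ρ : Fin N → ℝ) (i : Fin N) : ℝ :=
  ρ i + lam * (Δt / Δx) *
    (numFlux N Δx V m1 m2 U' ρ i -
      if (i : ℕ) = 0 then 0 else numFlux N Δx V m1 m2 U' ρ ((i : ℕ) - 1))


/-- The discrete free energy E[ρ] = Δx·Σᵢ (U(ρᵢ) + Vᵢ ρᵢ). -/
noncomputable def Ener (N : ℕ) (Δx : ℝ) (V : Fin N → ℝ) (U : ℝ → ℝ)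
    (ρ : Fin N → ℝ) : ℝ :=
  Δx * ∑ i, (U (ρ i) + V i * ρ i)

/-!
ξᵢ = U′(ρᵢ) + Vᵢ is a subgradient of the energy density at ρᵢ, so convexity gives
E[ρⁿ] − E[ρ] ≥ Δx Σᵢ ξᵢ (ρⁿᵢ − ρᵢ). Inserting the scheme and summing by parts (the no-flux
convention kills the boundary terms) turns the right-hand side into
λ Δt Σₖ (ξₖ − ξₖ₊₁) F_{k+1/2} = λ Δt Δx Σₖ v_{k+1/2} F_{k+1/2}, and upwinding makes each
v F a sum of squares weighted by the nonnegative mobilities.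
-/

theorem ConvexOn.mul_sub_le_sub_of_hasDerivAt {S : Set ℝ} {f : ℝ → ℝ} {f' x y : ℝ}
    (hf : ConvexOn ℝ S f) (hx : x ∈ S) (hy : y ∈ S) (hd : HasDerivAt f f' x) :
    f' * (y - x) ≤ f y - f x := by
  rcases lt_trichotomy x y with hxy | rfl | hyx
  · have h := hf.le_slope_of_hasDerivAt hx hy hxy hd
    rwa [slope_def_field, le_div_iff₀ (sub_pos.2 hxy)] at h
  · simp
  · have h := hf.slope_le_of_hasDerivAt hy hx hyx hd
    rw [slope_def_field, div_le_iff₀ (sub_pos.2 hyx)] at h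
    linarith

theorem mul_upwind_eq (v a b : ℝ) :
    v * (a * max v 0 + b * min v 0) = a * max v 0 ^ 2 + b * min v 0 ^ 2 := by
  rcases le_total v 0 with hv | hv
  · rw [max_eq_right hv, min_eq_left hv]; ring
  · rw [max_eq_left hv, min_eq_right hv]; ring

theorem Finset.sum_range_succ_mul_sub_prev (ξ F : ℕ → ℝ) (n : ℕ) :
    ∑ i ∈ range (n + 1), ξ i * (F i - if i = 0 then 0 else F (i - 1)) =
      ∑ k ∈ range n, (ξ k - ξ (k + 1)) * F k + ξ n * F n := by
  induction n with
  | zero => simp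
  | succ n ih =>
    rw [sum_range_succ, ih, sum_range_succ, if_neg n.succ_ne_zero, Nat.add_sub_cancel]
    ring

section Scheme

variable (N : ℕ) (Δx : ℝ) (V : Fin N → ℝ) (m1 m2 U' : ℝ → ℝ) (ρ : Fin N → ℝ)

noncomputable def chemPot (k : ℕ) : ℝ :=
  if h : k < N then U' (ρ ⟨k, h⟩) + V ⟨k, h⟩ else 0

noncomputable def dissipation (k : ℕ) : ℝ :=
  if h : k + 1 < N then
    m1 (ρ ⟨k, Nat.lt_of_succ_lt h⟩) * m2 (ρ ⟨k + 1, h⟩) *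
        (max (vel N Δx V U' ρ k) 0) ^ 2 +
      m1 (ρ ⟨k + 1, h⟩) * m2 (ρ ⟨k, Nat.lt_of_succ_lt h⟩) *
        (min (vel N Δx V U' ρ k) 0) ^ 2
  else 0

variable {N Δx V m1 m2 U' ρ}

theorem sub_chemPot_mul_numFlux (hΔx : Δx ≠ 0) (k : ℕ) :
    (chemPot N V U' ρ k - chemPot N V U' ρ (k + 1)) * numFlux N Δx V m1 m2 U' ρ k =
      Δx * dissipation N Δx V m1 m2 U' ρ k := by
  unfold numFlux dissipation
  split_ifs with h
  · have hv : chemPot N V U' ρ k - chemPot N V U' ρ (k + 1) = Δx * vel N Δx V U' ρ k := by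
      rw [vel, dif_pos h, chemPot, chemPot, dif_pos (Nat.lt_of_succ_lt h), dif_pos h]
      field_simp
      ring
    rw [hv, mul_assoc, mul_upwind_eq]
  · simp

theorem dissipation_nonneg (hm1 : ∀ i, 0 ≤ m1 (ρ i)) (hm2 : ∀ i, 0 ≤ m2 (ρ i)) (k : ℕ) :
    0 ≤ dissipation N Δx V m1 m2 U' ρ k := by
  unfold dissipation
  split_ifs with h
  · have := hm1 ⟨k, Nat.lt_of_succ_lt h⟩
    have := hm2 ⟨k + 1, h⟩
    have := hm1 ⟨k + 1, h⟩
    have := hm2 ⟨k, Nat.lt_of_succ_lt h⟩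
    positivity
  · exact le_rfl

theorem sum_chemPot_mul_Hmap_sub (hN : N ≠ 0) (hΔx : Δx ≠ 0) (Δt lam : ℝ) :
    ∑ i : Fin N, chemPot N V U' ρ i * (Hmap N Δx Δt V m1 m2 U' lam ρ i - ρ i) =
      lam * Δt * ∑ k ∈ range (N - 1), dissipation N Δx V m1 m2 U' ρ k := by
  obtain ⟨n, rfl⟩ := Nat.exists_eq_succ_of_ne_zero hN
  set F := numFlux (n + 1) Δx V m1 m2 U' ρ
  have hF : F n = 0 := by simp [F, numFlux]
  calc ∑ i : Fin (n + 1),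
        chemPot (n + 1) V U' ρ i * (Hmap (n + 1) Δx Δt V m1 m2 U' lam ρ i - ρ i)
      = lam * (Δt / Δx) * ∑ i ∈ range (n + 1),
          chemPot (n + 1) V U' ρ i * (F i - if i = 0 then 0 else F (i - 1)) := by
        rw [mul_sum, ← Fin.sum_univ_eq_sum_range]
        refine sum_congr rfl fun i _ => ?_
        rw [Hmap]; ring
    _ = lam * (Δt / Δx) * ∑ k ∈ range n, Δx * dissipation (n + 1) Δx V m1 m2 U' ρ k := by
        rw [sum_range_succ_mul_sub_prev, hF, mul_zero, add_zero]
        simp only [F, sub_chemPot_mul_numFlux hΔx]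
    _ = lam * Δt * ∑ k ∈ range (n + 1 - 1), dissipation (n + 1) Δx V m1 m2 U' ρ k := by
        rw [← mul_sum, Nat.add_sub_cancel]
        field_simp

theorem mul_sum_chemPot_mul_sub_le_Ener_sub (hΔx : 0 ≤ Δx) {U : ℝ → ℝ} {S : Set ℝ}
    (hU : ConvexOn ℝ S U) (hU' : ∀ i, HasDerivAt U (U' (ρ i)) (ρ i)) (hρ : ∀ i, ρ i ∈ S)
    {ρn : Fin N → ℝ} (hρn : ∀ i, ρn i ∈ S) :
    Δx * ∑ i : Fin N, chemPot N V U' ρ i * (ρn i - ρ i) ≤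
      Ener N Δx V U ρn - Ener N Δx V U ρ := by
  rw [Ener, Ener, ← mul_sub, ← sum_sub_distrib]
  refine mul_le_mul_of_nonneg_left (sum_le_sum fun i _ => ?_) hΔx
  have := hU.mul_sub_le_sub_of_hasDerivAt (hρ i) (hρn i) (hU' i)
  rw [chemPot, dif_pos i.isLt]
  linarith

end Scheme

theorem scheme_free_energy_dissipation_general
    (N : ℕ) (hN : 2 ≤ N) (Δx Δt : ℝ) (hΔx : Δx = 1 / N) (hΔt : 0 < Δt)
    (α : ℝ) (V : Fin N → ℝ)
    (m1 m2 : ℝ → ℝ)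
    (hm1_nonneg : ∀ s ∈ Icc 0 α, 0 ≤ m1 s) (hm2_nonneg : ∀ s ∈ Icc 0 α, 0 ≤ m2 s)
    (U U' : ℝ → ℝ) (hU_conv : ConvexOn ℝ (Icc 0 α) U)
    (hU_deriv : ∀ s ∈ Ioo 0 α, HasDerivAt U (U' s) s)
    (lam : ℝ) (hlam : 0 ≤ lam)
    (ρ ρn : Fin N → ℝ) (hρ : ∀ i, ρ i ∈ Ioo 0 α) (hρn : ∀ i, ρn i ∈ Icc 0 α)
    (hstep : Hmap N Δx Δt V m1 m2 U' lam ρ = ρn) :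
    Ener N Δx V U ρ ≤ Ener N Δx V U ρn ∧
    lam * Δt * Δx * (∑ k ∈ Finset.range (N - 1),
      if h : k + 1 < N then
        m1 (ρ ⟨k, Nat.lt_of_succ_lt h⟩) * m2 (ρ ⟨k + 1, h⟩) *
            (max (vel N Δx V U' ρ k) 0) ^ 2 +
          m1 (ρ ⟨k + 1, h⟩) * m2 (ρ ⟨k, Nat.lt_of_succ_lt h⟩) *
            (min (vel N Δx V U' ρ k) 0) ^ 2
      else 0)
      ≤ Ener N Δx V U ρn - Ener N Δx V U ρ := by
  change _ ∧ lam * Δt * Δx * ∑ k ∈ range (N - 1), dissipation N Δx V m1 m2 U' ρ k ≤ _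
  have hΔx_pos : 0 < Δx := by
    rw [hΔx]
    exact one_div_pos.2 (by exact_mod_cast (by omega : 0 < N))
  have hρ_Icc : ∀ i, ρ i ∈ Icc 0 α := fun i => Ioo_subset_Icc_self (hρ i)
  have hdiss : lam * Δt * Δx * ∑ k ∈ range (N - 1), dissipation N Δx V m1 m2 U' ρ k =
      Δx * ∑ i : Fin N, chemPot N V U' ρ i * (ρn i - ρ i) := by
    rw [← hstep, sum_chemPot_mul_Hmap_sub (by omega) hΔx_pos.ne']
    ring
  have hdiss_nonneg :
      0 ≤ lam * Δt * Δx * ∑ k ∈ range (N - 1), dissipation N Δx V m1 m2 U' ρ k :=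
    mul_nonneg (by positivity) <| sum_nonneg fun k _ =>
      dissipation_nonneg (fun i => hm1_nonneg _ (hρ_Icc i)) (fun i => hm2_nonneg _ (hρ_Icc i)) k
  have hconvex := mul_sum_chemPot_mul_sub_le_Ener_sub (V := V) hΔx_pos.le hU_conv
    (fun i => hU_deriv _ (hρ i)) hρ_Icc hρn
  exact ⟨by linarith, hdiss ▸ hconvex⟩

/-- Free-energy dissipation of one implicit Euler step of the upwind scheme. -/
theorem scheme_free_energy_dissipation
    (N : ℕ) (hN : 2 ≤ N) (Δx Δt : ℝ) (hΔx : Δx = 1 / N) (hΔt : 0 < Δt)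
    (α : ℝ) (hα : 0 < α) (V : Fin N → ℝ)
    (m1 m2 : ℝ → ℝ)
    (hm1_nonneg : ∀ s ∈ Icc 0 α, 0 ≤ m1 s) (hm2_nonneg : ∀ s ∈ Icc 0 α, 0 ≤ m2 s)
    (U U' : ℝ → ℝ) (hU_conv : ConvexOn ℝ (Icc 0 α) U)
    (hU_deriv : ∀ s ∈ Ioo 0 α, HasDerivAt U (U' s) s)
    (lam : ℝ) (hlam : 0 ≤ lam)
    (ρ ρn : Fin N → ℝ) (hρ : ∀ i, ρ i ∈ Ioo 0 α) (hρn : ∀ i, ρn i ∈ Icc 0 α)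
    (hstep : Hmap N Δx Δt V m1 m2 U' lam ρ = ρn) :
    Ener N Δx V U ρ ≤ Ener N Δx V U ρn ∧
    lam * Δt * Δx * (∑ k ∈ Finset.range (N - 1),
      if h : k + 1 < N then
        m1 (ρ ⟨k, Nat.lt_of_succ_lt h⟩) * m2 (ρ ⟨k + 1, h⟩) *
            (max (vel N Δx V U' ρ k) 0) ^ 2 +
          m1 (ρ ⟨k + 1, h⟩) * m2 (ρ ⟨k, Nat.lt_of_succ_lt h⟩) *
            (min (vel N Δx V U' ρ k) 0) ^ 2
      else 0)
      ≤ Ener N Δx V U ρn - Ener N Δx V U ρ :=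
  scheme_free_energy_dissipation_general N hN Δx Δt hΔx hΔt α V m1 m2 hm1_nonneg hm2_nonneg U U'
    hU_conv hU_deriv lam hlam ρ ρn hρ hρn hstep
end

section
/- Assume U : [0,α] → ℝ is convex and continuously differentiable on [0,α] with derivative U′, that m¹ : [0,α] → [0,∞) is continuous, nondecreasing and satisfies m¹(0) = 0, and that m² : [0,α] → [0,∞) is continuous, nonincreasing and satisfies m²(α) = 0. Then for every ρⁿ ∈ 𝒜_Δ = [0,α]^N there exists exactly one ρ ∈ 𝒜_Δ such that H(ρ) = ρⁿ (well-posedness of one step of the implicit finite-volume scheme). -/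
/-!
Existence is a sub-solution argument. The map `H` is continuous on the box `[0,α]^N` and
off-diagonally antitone: `H_i` is nonincreasing in `ρ_j` for `j ≠ i`, because the upwind flux
`F_{k+1/2}` is nondecreasing in `ρ_k` and nonincreasing in `ρ_{k+1}`. The state `0` is a
subsolution since `m¹(0) = 0`, and `H_i(ρ) ≥ α` as soon as `ρ_i = α` since `m²(α) = 0`. A maximiser
of `∑ ρ_i` over the compact set of subsolutions `{H(ρ) ≤ ρⁿ}` is then a solution: wherever
`H_i(ρ) < ρⁿ_i`, raising `ρ_i` a little would give a larger subsolution.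

Uniqueness follows from the comparison principle `H(ρ) ≤ H(σ) → ρ ≤ σ`. Testing `H(ρ) - H(σ)`
against the indicator of `{ρ > σ}` and summing by parts, the fluxes only contribute interface
terms, each nonnegative by the same monotonicity of the upwind flux.
-/

open Set Finset

lemma ConvexOn.monotoneOn_of_hasDerivWithinAt {S : Set ℝ} {f f' : ℝ → ℝ}
    (hf : ConvexOn ℝ S f) (hf' : ∀ x ∈ S, HasDerivWithinAt f (f' x) S x) : MonotoneOn f' S := by
  intro x hx y hy hxy
  rcases hxy.eq_or_lt with rfl | hlt
  · exact le_rfl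
  · exact (hf.le_slope_of_hasDerivWithinAt hx hy hlt (hf' x hx)).trans
      (hf.slope_le_of_hasDerivWithinAt hx hy hlt (hf' y hy))

section OffDiagAntitone

variable {ι : Type*} {H : (ι → ℝ) → ι → ℝ}

def OffDiagAntitoneOn (H : (ι → ℝ) → ι → ℝ) (s : Set (ι → ℝ)) : Prop :=
  ∀ ⦃ρ⦄, ρ ∈ s → ∀ ⦃τ⦄, τ ∈ s → ρ ≤ τ → ∀ i, ρ i = τ i → H τ i ≤ H ρ i

variable [DecidableEq ι] {l u y : ι → ℝ}

lemma exists_update_gt_of_lt (hcont : ContinuousOn H (Icc l u))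
    (hH : OffDiagAntitoneOn H (Icc l u)) {g : ι → ℝ} (hg : g ∈ Icc l u) (hgy : H g ≤ y)
    {i : ι} (hgu : g i < u i) (hlt : H g i < y i) :
    ∃ t > g i, Function.update g i t ∈ Icc l u ∧ H (Function.update g i t) ≤ y := by
  have hmaps : MapsTo (Function.update g i) (Icc (g i) (u i)) (Icc l u) := fun t ht =>
    ⟨le_update_iff.2 ⟨(hg.1 i).trans ht.1, fun j _ => hg.1 j⟩,
      update_le_iff.2 ⟨ht.2, fun j _ => hg.2 j⟩⟩
  have hupdate : Continuous (Function.update g i) := continuous_const.update i continuous_id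
  have hφ : ContinuousOn (fun t => H (Function.update g i t) i) (Icc (g i) (u i)) :=
    (continuous_apply i).comp_continuousOn (hcont.comp hupdate.continuousOn hmaps)
  have := left_nhdsWithin_Ioc_neBot hgu
  obtain ⟨t, ht, hHt⟩ := (eventually_mem_nhdsWithin.and
    (((hφ (g i) ⟨le_rfl, hgu.le⟩).mono Ioc_subset_Icc_self).eventually_lt_const
      (by simpa using hlt))).exists
  refine ⟨t, ht.1, hmaps (Ioc_subset_Icc_self ht), fun j => ?_⟩
  rcases eq_or_ne j i with rfl | hj
  · simpa using hHt.le
  · exact (hH hg (hmaps (Ioc_subset_Icc_self ht)) (le_update_self_iff.2 ht.1.le) j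
      (Function.update_of_ne hj t g).symm).trans (hgy j)

theorem exists_eq_of_offDiagAntitoneOn [Fintype ι] (hlu : l ≤ u)
    (hcont : ContinuousOn H (Icc l u)) (hH : OffDiagAntitoneOn H (Icc l u)) (hl : H l ≤ y)
    (hu : ∀ ρ ∈ Icc l u, ∀ i, ρ i = u i → y i ≤ H ρ i) :
    ∃ ρ ∈ Icc l u, H ρ = y := by
  set S := Icc l u ∩ H ⁻¹' Iic y
  have hS : IsCompact S := isCompact_Icc.of_isClosed_subset
    (hcont.preimage_isClosed_of_isClosed isClosed_Icc isClosed_Iic) inter_subset_left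
  obtain ⟨g, ⟨hg, hgy⟩, hmax⟩ := hS.exists_isMaxOn ⟨l, ⟨le_rfl, hlu⟩, hl⟩
    (continuous_finsetSum univ fun i _ => continuous_apply i).continuousOn
  refine ⟨g, hg, le_antisymm hgy fun i => ?_⟩
  by_contra! hlt
  have hgu : g i < u i := (hg.2 i).lt_of_ne fun h => (hu g hg i h).not_gt hlt
  obtain ⟨t, hti, htS, hty⟩ := exists_update_gt_of_lt hcont hH hg hgy hgu hlt
  have hsum : ∑ j, Function.update g i t j ≤ ∑ j, g j := hmax (show _ ∈ S from ⟨htS, hty⟩)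
  rw [sum_update_of_mem (Finset.mem_univ i), sum_sdiff_eq_sub (Finset.subset_univ _),
    sum_singleton] at hsum
  linarith

end OffDiagAntitone

lemma sum_range_mul_sub_prev (W G : ℕ → ℝ) (n : ℕ) :
    ∑ i ∈ range n, W i * (G i - if i = 0 then 0 else G (i - 1)) =
      ∑ k ∈ range n, (W k - W (k + 1)) * G k + W n * if n = 0 then 0 else G (n - 1) := by
  induction n with
  | zero => simp
  | succ n ih =>
    rw [sum_range_succ, ih, sum_range_succ]
    simp only [Nat.add_one_ne_zero, if_false, Nat.add_sub_cancel]
    ring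

structure IsMobilityPair (s : Set ℝ) (m1 m2 : ℝ → ℝ) : Prop where
  monotoneOn_left : MonotoneOn m1 s
  nonneg_left : ∀ x ∈ s, 0 ≤ m1 x
  antitoneOn_right : AntitoneOn m2 s
  nonneg_right : ∀ x ∈ s, 0 ≤ m2 x

def upwindFlux (m1 m2 : ℝ → ℝ) (a b v : ℝ) : ℝ :=
  m1 a * m2 b * max v 0 + m1 b * m2 a * min v 0

namespace IsMobilityPair

variable {s : Set ℝ} {m1 m2 : ℝ → ℝ} {a a' b b' v v' : ℝ}

lemma upwindFlux_le_upwindFlux (hm : IsMobilityPair s m1 m2) (ha : a ∈ s) (ha' : a' ∈ s)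
    (hb : b ∈ s) (hb' : b' ∈ s) (haa' : a ≤ a') (hbb' : b' ≤ b) (hvv' : v ≤ v') :
    upwindFlux m1 m2 a b v ≤ upwindFlux m1 m2 a' b' v' := by
  have h₁ : m1 a * m2 b ≤ m1 a' * m2 b' :=
    mul_le_mul (hm.1 ha ha' haa') (hm.3 hb' hb hbb') (hm.4 b hb) (hm.2 a' ha')
  have h₂ : m1 b' * m2 a' ≤ m1 b * m2 a :=
    mul_le_mul (hm.1 hb' hb hbb') (hm.3 ha ha' haa') (hm.4 a' ha') (hm.2 b hb)
  unfold upwindFlux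
  gcongr ?_ + ?_
  · exact mul_le_mul h₁ (max_le_max hvv' le_rfl) (le_max_right _ _)
      (mul_nonneg (hm.2 a' ha') (hm.4 b' hb'))
  · calc m1 b * m2 a * min v 0 ≤ m1 b' * m2 a' * min v 0 :=
          mul_le_mul_of_nonpos_right h₂ (min_le_right v 0)
      _ ≤ m1 b' * m2 a' * min v' 0 := by
          gcongr
          exact mul_nonneg (hm.2 b' hb') (hm.4 a' ha')

lemma upwindFlux_nonneg (hm : IsMobilityPair s m1 m2) (ha : a ∈ s) (hb : b ∈ s)
    (h : m2 a = 0) : 0 ≤ upwindFlux m1 m2 a b v := by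
  simpa [upwindFlux, h] using
    mul_nonneg (mul_nonneg (hm.2 a ha) (hm.4 b hb)) (le_max_right v 0)

lemma upwindFlux_nonpos (hm : IsMobilityPair s m1 m2) (ha : a ∈ s) (hb : b ∈ s)
    (h : m2 b = 0) : upwindFlux m1 m2 a b v ≤ 0 := by
  simpa [upwindFlux, h] using
    mul_nonpos_of_nonneg_of_nonpos (mul_nonneg (hm.2 b hb) (hm.4 a ha)) (min_le_right v 0)

end IsMobilityPair

section Scheme

variable {N : ℕ} {Δx Δt lam : ℝ} {V : Fin N → ℝ} {m1 m2 U' : ℝ → ℝ} {s : Set ℝ}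
  {ρ σ : Fin N → ℝ} {k : ℕ}

lemma numFlux_of_lt (hk : k + 1 < N) :
    numFlux N Δx V m1 m2 U' ρ k =
      upwindFlux m1 m2 (ρ ⟨k, by omega⟩) (ρ ⟨k + 1, hk⟩) (vel N Δx V U' ρ k) :=
  dif_pos hk

lemma numFlux_of_le (hk : N ≤ k + 1) : numFlux N Δx V m1 m2 U' ρ k = 0 :=
  dif_neg (by omega)

lemma vel_le_vel (hΔx : 0 < Δx) (hU' : MonotoneOn U' s) (hρ : ρ ∈ univ.pi fun _ => s)
    (hσ : σ ∈ univ.pi fun _ => s) (hk : k + 1 < N)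
    (h₀ : σ ⟨k, by omega⟩ ≤ ρ ⟨k, by omega⟩) (h₁ : ρ ⟨k + 1, hk⟩ ≤ σ ⟨k + 1, hk⟩) :
    vel N Δx V U' σ k ≤ vel N Δx V U' ρ k := by
  simp only [vel, dif_pos hk, neg_le_neg_iff]
  gcongr ?_ / _
  linarith [hU' (hσ _ (mem_univ _)) (hρ _ (mem_univ _)) h₀,
    hU' (hρ _ (mem_univ _)) (hσ _ (mem_univ _)) h₁]

lemma numFlux_le_numFlux (hm : IsMobilityPair s m1 m2) (hU' : MonotoneOn U' s) (hΔx : 0 < Δx)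
    (hρ : ρ ∈ univ.pi fun _ => s) (hσ : σ ∈ univ.pi fun _ => s) (hk : k + 1 < N)
    (h₀ : σ ⟨k, by omega⟩ ≤ ρ ⟨k, by omega⟩) (h₁ : ρ ⟨k + 1, hk⟩ ≤ σ ⟨k + 1, hk⟩) :
    numFlux N Δx V m1 m2 U' σ k ≤ numFlux N Δx V m1 m2 U' ρ k := by
  rw [numFlux_of_lt hk, numFlux_of_lt hk]
  exact hm.upwindFlux_le_upwindFlux (hσ _ (mem_univ _)) (hρ _ (mem_univ _))
    (hσ _ (mem_univ _)) (hρ _ (mem_univ _)) h₀ h₁ (vel_le_vel hΔx hU' hρ hσ hk h₀ h₁)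

lemma Hmap_offDiagAntitoneOn (hm : IsMobilityPair s m1 m2) (hU' : MonotoneOn U' s)
    (hΔx : 0 < Δx) (hc : 0 ≤ lam * (Δt / Δx)) :
    OffDiagAntitoneOn (Hmap N Δx Δt V m1 m2 U' lam) (univ.pi fun _ => s) := by
  intro ρ hρ τ hτ hle i hi
  have hout : numFlux N Δx V m1 m2 U' τ i ≤ numFlux N Δx V m1 m2 U' ρ i := by
    rcases lt_or_ge ((i : ℕ) + 1) N with hk | hk
    · exact numFlux_le_numFlux hm hU' hΔx hρ hτ hk hi.ge (hle _)
    · rw [numFlux_of_le hk, numFlux_of_le hk]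
  have hin : (if (i : ℕ) = 0 then 0 else numFlux N Δx V m1 m2 U' ρ (i - 1)) ≤
      (if (i : ℕ) = 0 then 0 else numFlux N Δx V m1 m2 U' τ (i - 1)) := by
    obtain ⟨_ | j, hj⟩ := i
    · simp
    · simpa using numFlux_le_numFlux hm hU' hΔx hτ hρ hj (hle _) hi.ge
  simp only [Hmap, hi]
  gcongr

lemma Hmap_zero (hm10 : m1 0 = 0) : Hmap N Δx Δt V m1 m2 U' lam 0 = 0 := by
  have hflux : ∀ k, numFlux N Δx V m1 m2 U' 0 k = 0 := fun k => by
    rcases lt_or_ge (k + 1) N with hk | hk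
    · simp [numFlux_of_lt hk, upwindFlux, hm10]
    · exact numFlux_of_le hk
  ext i
  simp [Hmap, hflux]

lemma self_le_Hmap (hm : IsMobilityPair s m1 m2) (hc : 0 ≤ lam * (Δt / Δx))
    (hρ : ρ ∈ univ.pi fun _ => s) {i : Fin N} (hi : m2 (ρ i) = 0) :
    ρ i ≤ Hmap N Δx Δt V m1 m2 U' lam ρ i := by
  have hout : 0 ≤ numFlux N Δx V m1 m2 U' ρ i := by
    rcases lt_or_ge ((i : ℕ) + 1) N with hk | hk
    · rw [numFlux_of_lt hk]
      exact hm.upwindFlux_nonneg (hρ _ (mem_univ _)) (hρ _ (mem_univ _)) hi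
    · rw [numFlux_of_le hk]
  have hin : (if (i : ℕ) = 0 then 0 else numFlux N Δx V m1 m2 U' ρ (i - 1)) ≤ 0 := by
    obtain ⟨_ | j, hj⟩ := i
    · simp
    · simpa [numFlux_of_lt hj] using
        hm.upwindFlux_nonpos (hρ _ (mem_univ _)) (hρ _ (mem_univ _)) hi
  have := mul_nonneg hc (sub_nonneg.2 (hin.trans hout))
  simp only [Hmap]
  linarith

lemma continuousOn_numFlux (hU' : ContinuousOn U' s) (hm1 : ContinuousOn m1 s)
    (hm2 : ContinuousOn m2 s) (k : ℕ) :
    ContinuousOn (fun ρ => numFlux N Δx V m1 m2 U' ρ k) (univ.pi fun _ => s) := by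
  rcases lt_or_ge (k + 1) N with hk | hk
  · simp only [numFlux_of_lt hk, upwindFlux, vel, dif_pos hk, div_eq_mul_inv]
    fun_prop (disch := exact fun ρ hρ => hρ _ (mem_univ _))
  · simp only [numFlux_of_le hk]
    exact continuousOn_const

lemma continuousOn_Hmap (hU' : ContinuousOn U' s) (hm1 : ContinuousOn m1 s)
    (hm2 : ContinuousOn m2 s) :
    ContinuousOn (Hmap N Δx Δt V m1 m2 U' lam) (univ.pi fun _ => s) := by
  refine continuousOn_pi.2 fun i => ?_
  have hin : ContinuousOn (fun ρ => if (i : ℕ) = 0 then 0 else numFlux N Δx V m1 m2 U' ρ (i - 1))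
      (univ.pi fun _ => s) := by
    split_ifs
    exacts [continuousOn_const, continuousOn_numFlux hU' hm1 hm2 _]
  exact (continuous_apply i).continuousOn.add
    (continuousOn_const.mul ((continuousOn_numFlux hU' hm1 hm2 i).sub hin))

/-- The indicator of `{σ < ρ}`, indexed by `ℕ` and extended by `0` past the last cell so that it
can be summed by parts together with the `ℕ`-indexed fluxes. -/
noncomputable def exceedIndicator (ρ σ : Fin N → ℝ) (k : ℕ) : ℝ :=
  if h : k < N then (if σ ⟨k, h⟩ < ρ ⟨k, h⟩ then 1 else 0) else 0

lemma exceedIndicator_apply (i : Fin N) :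
    exceedIndicator ρ σ i = if σ i < ρ i then 1 else 0 :=
  dif_pos i.isLt

lemma exceedIndicator_nonneg (k : ℕ) : 0 ≤ exceedIndicator ρ σ k := by
  unfold exceedIndicator
  split_ifs <;> norm_num

lemma exceedIndicator_sub_mul_numFlux_sub_nonneg (hm : IsMobilityPair s m1 m2)
    (hU' : MonotoneOn U' s) (hΔx : 0 < Δx) (hρ : ρ ∈ univ.pi fun _ => s)
    (hσ : σ ∈ univ.pi fun _ => s) (k : ℕ) :
    0 ≤ (exceedIndicator ρ σ k - exceedIndicator ρ σ (k + 1)) *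
      (numFlux N Δx V m1 m2 U' ρ k - numFlux N Δx V m1 m2 U' σ k) := by
  rcases lt_or_ge (k + 1) N with hk | hk
  · simp only [exceedIndicator, dif_pos hk, dif_pos (by omega : k < N)]
    split_ifs with h₀ h₁ h₁
    · simp
    · have := numFlux_le_numFlux (V := V) hm hU' hΔx hρ hσ hk h₀.le (not_lt.1 h₁)
      linarith
    · have := numFlux_le_numFlux (V := V) hm hU' hΔx hσ hρ hk (not_lt.1 h₀) h₁.le
      linarith
    · simp
  · simp [numFlux_of_le hk]

theorem le_of_Hmap_le (hm : IsMobilityPair s m1 m2) (hU' : MonotoneOn U' s) (hΔx : 0 < Δx)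
    (hc : 0 ≤ lam * (Δt / Δx)) (hρ : ρ ∈ univ.pi fun _ => s) (hσ : σ ∈ univ.pi fun _ => s)
    (h : Hmap N Δx Δt V m1 m2 U' lam ρ ≤ Hmap N Δx Δt V m1 m2 U' lam σ) : ρ ≤ σ := by
  by_contra hne
  obtain ⟨i₀, hi₀⟩ : ∃ i, σ i < ρ i := by simpa [Pi.le_def] using hne
  set W := exceedIndicator ρ σ with hW
  set G : ℕ → ℝ := fun k => numFlux N Δx V m1 m2 U' ρ k - numFlux N Δx V m1 m2 U' σ k
  have hdiv : 0 ≤ ∑ i : Fin N, W i * (G i - if (i : ℕ) = 0 then 0 else G (i - 1)) := by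
    rw [Fin.sum_univ_eq_sum_range (fun i => W i * (G i - if i = 0 then 0 else G (i - 1))),
      sum_range_mul_sub_prev]
    have hboundary : (W N * if N = 0 then 0 else G (N - 1)) = 0 := by
      split_ifs with hN
      · simp
      · simp [G, numFlux_of_le (by omega : N ≤ N - 1 + 1)]
    rw [hboundary, add_zero]
    exact sum_nonneg fun k _ =>
      exceedIndicator_sub_mul_numFlux_sub_nonneg hm hU' hΔx hρ hσ k
  have hexcess : 0 < ∑ i : Fin N, W i * (ρ i - σ i) := by
    refine sum_pos' (fun i _ => ?_) ⟨i₀, Finset.mem_univ _, ?_⟩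
    · rw [hW, exceedIndicator_apply]
      split_ifs with hi <;> linarith
    · rw [hW, exceedIndicator_apply, if_pos hi₀]
      linarith
  have hweighted : ∑ i : Fin N,
      W i * (Hmap N Δx Δt V m1 m2 U' lam ρ i - Hmap N Δx Δt V m1 m2 U' lam σ i) ≤ 0 :=
    sum_nonpos fun i _ => mul_nonpos_of_nonneg_of_nonpos (exceedIndicator_nonneg _)
      (sub_nonpos.2 (h i))
  have hsplit : ∀ i : Fin N,
      W i * (Hmap N Δx Δt V m1 m2 U' lam ρ i - Hmap N Δx Δt V m1 m2 U' lam σ i) =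
        W i * (ρ i - σ i) +
          lam * (Δt / Δx) * (W i * (G i - if (i : ℕ) = 0 then 0 else G (i - 1))) := by
    intro i
    simp only [Hmap, G]
    split_ifs <;> ring
  rw [sum_congr rfl fun i _ => hsplit i, sum_add_distrib, ← mul_sum] at hweighted
  linarith [mul_nonneg hc hdiv]

end Scheme

/-- Well-posedness of one step of the implicit finite-volume scheme on 𝒜_Δ = [0,α]^N
when U ∈ C¹([0,α]). -/
theorem scheme_well_posedness_closed
    (N : ℕ) (hN : 2 ≤ N) (Δx Δt : ℝ) (hΔx : Δx = 1 / N) (hΔt : 0 < Δt)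
    (α : ℝ) (hα : 0 < α) (V : Fin N → ℝ)
    (U U' : ℝ → ℝ) (hU_conv : ConvexOn ℝ (Icc 0 α) U)
    (hU_deriv : ∀ s ∈ Icc 0 α, HasDerivWithinAt U (U' s) (Icc 0 α) s)
    (hU'_cont : ContinuousOn U' (Icc 0 α))
    (m1 m2 : ℝ → ℝ)
    (hm1_cont : ContinuousOn m1 (Icc 0 α)) (hm1_mono : MonotoneOn m1 (Icc 0 α))
    (hm1_nonneg : ∀ s ∈ Icc 0 α, 0 ≤ m1 s) (hm10 : m1 0 = 0)
    (hm2_cont : ContinuousOn m2 (Icc 0 α)) (hm2_anti : AntitoneOn m2 (Icc 0 α))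
    (hm2_nonneg : ∀ s ∈ Icc 0 α, 0 ≤ m2 s) (hm2α : m2 α = 0)
    (ρn : Fin N → ℝ) (hρn : ∀ i, ρn i ∈ Icc 0 α) :
    ∃! ρ : Fin N → ℝ, (∀ i, ρ i ∈ Icc 0 α) ∧ Hmap N Δx Δt V m1 m2 U' 1 ρ = ρn := by
  have hΔx0 : 0 < Δx := by
    rw [hΔx]
    exact one_div_pos.2 (by exact_mod_cast (by omega : 0 < N))
  have hc : 0 ≤ 1 * (Δt / Δx) := by positivity
  have hm : IsMobilityPair (Icc 0 α) m1 m2 := ⟨hm1_mono, hm1_nonneg, hm2_anti, hm2_nonneg⟩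
  have hU' : MonotoneOn U' (Icc 0 α) := hU_conv.monotoneOn_of_hasDerivWithinAt hU_deriv
  have hbox : (univ.pi fun _ => Icc 0 α) = Icc (0 : Fin N → ℝ) fun _ => α := pi_univ_Icc _ _
  refine existsUnique_of_exists_of_unique ?_ ?_
  · obtain ⟨ρ, hρ, hHρ⟩ := exists_eq_of_offDiagAntitoneOn
      (H := Hmap N Δx Δt V m1 m2 U' 1) (l := 0) (fun _ => hα.le)
      (hbox ▸ continuousOn_Hmap hU'_cont hm1_cont hm2_cont)
      (hbox ▸ Hmap_offDiagAntitoneOn hm hU' hΔx0 hc)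
      (by rw [Hmap_zero hm10]; exact fun i => (hρn i).1)
      fun ρ hρ i hi => (hρn i).2.trans <| hi ▸ self_le_Hmap hm hc (hbox ▸ hρ) (hi ▸ hm2α)
    exact ⟨ρ, fun i => ⟨hρ.1 i, hρ.2 i⟩, hHρ⟩
  · rintro ρ σ ⟨hρ, hHρ⟩ ⟨hσ, hHσ⟩
    have hρ' : ρ ∈ univ.pi fun _ => Icc 0 α := fun i _ => hρ i
    have hσ' : σ ∈ univ.pi fun _ => Icc 0 α := fun i _ => hσ i
    exact le_antisymm (le_of_Hmap_le hm hU' hΔx0 hc hρ' hσ' (hHρ.trans hHσ.symm).le)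
      (le_of_Hmap_le hm hU' hΔx0 hc hσ' hρ' (hHσ.trans hHρ.symm).le)
end

section
/- Assume m¹ : [0,α] → [0,∞) is continuous, nondecreasing, with m¹(0) = 0 and m¹ > 0 on (0,α]; m² : [0,α] → [0,∞) is continuous, nonincreasing, with m²(α) = 0 and m² > 0 on [0,α); and U′ : (0,α) → ℝ is a strictly increasing bijection of (0,α) onto ℝ. Then for every M ∈ (0,α) there is exactly one constant C ∈ ℝ such that Δx·Σ_{i=1}^N (U′)⁻¹(C − V_i) = M, and the vector ρ^∞ defined by ρ^∞_i = (U′)⁻¹(C − V_i) is the unique ρ ∈ (0,α)^N satisfying both H(ρ) = ρ and Δx·Σ_{i=1}^N ρ_i = M. -/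
/-!
The mass `C ↦ Δx · ∑ᵢ (U′)⁻¹(C − Vᵢ)` is a continuous strictly increasing average of shifts of
`(U′)⁻¹`, whose range is `(0, α)`; bracketing `M` between its values at `C = y + min V` and
`C = y + max V`, where `(U′)⁻¹ y = M`, the intermediate value theorem gives exactly one `C`.

For the scheme, `H(ρ) = ρ` says that the discrete divergence of the fluxes vanishes; with the
no-flux boundary condition every flux `F_{i+1/2}` then vanishes. On `(0, α)^N` both mobility
products are positive, so the upwind flux vanishes only if the velocity does, i.e. only if
`ξᵢ = U′(ρᵢ) + Vᵢ` is constant. Then `ρᵢ = (U′)⁻¹(C′ − Vᵢ)` and the mass fixes `C′ = C`.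
-/

open Set Finset

section Inverse

variable {α β : Type*} [LinearOrder α] [LinearOrder β] {U : α → β} {W : β → α} {s : Set α}

theorem StrictMonoOn.strictMono_of_leftInverse (hU : StrictMonoOn U s) (hWs : ∀ y, W y ∈ s)
    (hUW : Function.LeftInverse U W) : StrictMono W := fun a b hab =>
  (hU.lt_iff_lt (hWs a) (hWs b)).1 (by rwa [hUW a, hUW b])

theorem StrictMonoOn.leftInvOn_of_leftInverse (hU : StrictMonoOn U s) (hWs : ∀ y, W y ∈ s)
    (hUW : Function.LeftInverse U W) : LeftInvOn W U s := fun _ ht =>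
  hU.injOn (hWs _) ht (hUW _)

end Inverse

theorem Monotone.continuous_of_isOpen_range {α β : Type*} [LinearOrder α] [TopologicalSpace α]
    [OrderTopology α] [LinearOrder β] [TopologicalSpace β] [OrderTopology β] [DenselyOrdered β]
    {f : α → β} (hf : Monotone f) (hrange : IsOpen (range f)) : Continuous f :=
  continuous_iff_continuousAt.2 fun a =>
    continuousAt_of_monotoneOn_of_image_mem_nhds (hf.monotoneOn univ) Filter.univ_mem
      (by rw [image_univ]; exact hrange.mem_nhds (mem_range_self a))

section Mass

variable {ι : Type*} [Fintype ι] [Nonempty ι] {W : ℝ → ℝ} {c : ℝ}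

theorem strictMono_mul_sum_sub (hW : StrictMono W) (hc : 0 < c) (V : ι → ℝ) :
    StrictMono fun C => c * ∑ i, W (C - V i) := fun _ _ hab =>
  mul_lt_mul_of_pos_left
    (Finset.sum_lt_sum_of_nonempty univ_nonempty fun _ _ => hW (by linarith)) hc

theorem existsUnique_mul_sum_sub_eq (hW : StrictMono W) (hWc : Continuous W)
    (hc : c * Fintype.card ι = 1) (V : ι → ℝ) {M : ℝ} (hM : M ∈ range W) :
    ∃! C, c * ∑ i, W (C - V i) = M := by
  obtain ⟨y, rfl⟩ := hM
  have hc_pos : 0 < c := pos_of_mul_pos_left (hc.symm ▸ one_pos) (Nat.cast_nonneg _)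
  have hmass_const : ∀ a : ℝ, c * ∑ _i : ι, a = a := fun a => by
    rw [sum_const, card_univ, nsmul_eq_mul, ← mul_assoc, hc, one_mul]
  obtain ⟨imin, -, himin⟩ := exists_min_image univ V univ_nonempty
  obtain ⟨imax, -, himax⟩ := exists_max_image univ V univ_nonempty
  have hlo : c * ∑ i, W (y + V imin - V i) ≤ W y := by
    calc c * ∑ i, W (y + V imin - V i) ≤ c * ∑ _i : ι, W y := by
          gcongr with i
          exact hW.monotone (by linarith [himin i (mem_univ i)])
      _ = W y := hmass_const _
  have hhi : W y ≤ c * ∑ i, W (y + V imax - V i) := by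
    calc W y = c * ∑ _i : ι, W y := (hmass_const _).symm
      _ ≤ c * ∑ i, W (y + V imax - V i) := by
          gcongr with i
          exact hW.monotone (by linarith [himax i (mem_univ i)])
  obtain ⟨C, hC⟩ := intermediate_value_univ (f := fun C => c * ∑ i, W (C - V i)) _ _
    (by fun_prop) ⟨hlo, hhi⟩
  exact ⟨C, hC, fun _ h => (strictMono_mul_sum_sub hW hc_pos V).injective (h.trans hC.symm)⟩

end Mass

section Scheme

variable {N : ℕ} {Δx Δt : ℝ} {V : Fin N → ℝ} {m1 m2 U' : ℝ → ℝ} {ρ : Fin N → ℝ} {lam : ℝ}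

theorem upwind_eq_zero_iff {A B v : ℝ} (hA : 0 < A) (hB : 0 < B) :
    A * max v 0 + B * min v 0 = 0 ↔ v = 0 := by
  refine ⟨fun h => ?_, fun h => by simp [h]⟩
  rcases le_total v 0 with hv | hv
  · rw [max_eq_right hv, min_eq_left hv] at h
    nlinarith
  · rw [max_eq_left hv, min_eq_right hv] at h
    nlinarith

theorem vel_eq_zero_iff (hΔx : Δx ≠ 0) {k : ℕ} (hk : k + 1 < N) :
    vel N Δx V U' ρ k = 0 ↔
      U' (ρ ⟨k + 1, hk⟩) + V ⟨k + 1, hk⟩ = U' (ρ ⟨k, by omega⟩) + V ⟨k, by omega⟩ := by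
  rw [vel, dif_pos hk, neg_eq_zero, div_eq_zero_iff, or_iff_left hΔx, sub_eq_zero]

theorem numFlux_eq_zero_iff (hm1 : ∀ i, 0 < m1 (ρ i)) (hm2 : ∀ i, 0 < m2 (ρ i)) {k : ℕ}
    (hk : k + 1 < N) : numFlux N Δx V m1 m2 U' ρ k = 0 ↔ vel N Δx V U' ρ k = 0 := by
  rw [numFlux, dif_pos hk]
  exact upwind_eq_zero_iff (mul_pos (hm1 _) (hm2 _)) (mul_pos (hm1 _) (hm2 _))

theorem numFlux_eq_zero_of_vel_eq_zero {k : ℕ} (h : vel N Δx V U' ρ k = 0) :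
    numFlux N Δx V m1 m2 U' ρ k = 0 := by
  unfold numFlux
  split_ifs <;> simp [h]

theorem Hmap_eq_self_iff (hq : lam * (Δt / Δx) ≠ 0) :
    Hmap N Δx Δt V m1 m2 U' lam ρ = ρ ↔ ∀ k, numFlux N Δx V m1 m2 U' ρ k = 0 := by
  refine ⟨fun hfix k => ?_, fun h => funext fun i => by simp [Hmap, h]⟩
  have hdiv : ∀ i : Fin N, numFlux N Δx V m1 m2 U' ρ i =
      if (i : ℕ) = 0 then 0 else numFlux N Δx V m1 m2 U' ρ ((i : ℕ) - 1) := fun i => by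
    have := congrFun hfix i
    simpa only [Hmap, add_eq_left, mul_eq_zero, hq, false_or, sub_eq_zero] using this
  -- with the no-flux condition `F_{1/2} = 0`, the fluxes telescope from the left boundary
  induction k with
  | zero =>
    by_cases h0 : 0 < N
    · simpa using hdiv ⟨0, h0⟩
    · simp [numFlux, show ¬ 0 + 1 < N by omega]
  | succ k ih =>
    by_cases hk : k + 1 < N
    · simpa [ih] using hdiv ⟨k + 1, hk⟩
    · simp [numFlux, show ¬ k + 1 + 1 < N by omega]

theorem Fin.eq_of_forall_succ_eq {β : Type*} {f : Fin N → β}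
    (h : ∀ k (hk : k + 1 < N), f ⟨k + 1, hk⟩ = f ⟨k, by omega⟩) (i j : Fin N) : f i = f j := by
  have key : ∀ k (hk : k < N), f ⟨k, hk⟩ = f ⟨0, by omega⟩ := by
    intro k
    induction k with
    | zero => exact fun _ => rfl
    | succ k ih => exact fun hk => (h k hk).trans (ih _)
  exact (key i i.2).trans (key j j.2).symm

theorem Hmap_eq_self_of_forall_add_eq (C : ℝ) (hξ : ∀ i, U' (ρ i) + V i = C) :
    Hmap N Δx Δt V m1 m2 U' lam ρ = ρ := by
  have hvel : ∀ k, vel N Δx V U' ρ k = 0 := fun k => by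
    unfold vel
    split_ifs <;> simp [hξ]
  funext i
  simp [Hmap, numFlux_eq_zero_of_vel_eq_zero (hvel _)]

theorem add_eq_add_of_Hmap_eq_self (hlam : lam ≠ 0) (hΔt : Δt ≠ 0) (hΔx : Δx ≠ 0)
    (hm1 : ∀ i, 0 < m1 (ρ i)) (hm2 : ∀ i, 0 < m2 (ρ i))
    (hfix : Hmap N Δx Δt V m1 m2 U' lam ρ = ρ) (i j : Fin N) :
    U' (ρ i) + V i = U' (ρ j) + V j := by
  have hflux := (Hmap_eq_self_iff (by positivity)).1 hfix
  refine Fin.eq_of_forall_succ_eq (f := fun i => U' (ρ i) + V i) (fun k hk => ?_) i j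
  exact (vel_eq_zero_iff hΔx hk).1 ((numFlux_eq_zero_iff hm1 hm2 hk).1 (hflux k))

end Scheme

theorem scheme_unique_steady_state_general
    (N : ℕ) (hN : 2 ≤ N) (Δx Δt : ℝ) (hΔx : Δx = 1 / N) (hΔt : 0 < Δt)
    (α : ℝ) (V : Fin N → ℝ)
    (m1 m2 : ℝ → ℝ)
    (hm1_pos : ∀ s ∈ Ioc 0 α, 0 < m1 s)
    (hm2_pos : ∀ s ∈ Ico 0 α, 0 < m2 s)
    (U' : ℝ → ℝ) (hU'_smono : StrictMonoOn U' (Ioo 0 α))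
    (W : ℝ → ℝ) (hW : ∀ y : ℝ, W y ∈ Ioo 0 α ∧ U' (W y) = y)
    (M : ℝ) (hM : M ∈ Ioo 0 α) :
    (∃! C : ℝ, Δx * ∑ i, W (C - V i) = M) ∧
    (∀ C : ℝ, Δx * ∑ i, W (C - V i) = M →
      (Hmap N Δx Δt V m1 m2 U' 1 (fun i => W (C - V i)) = fun i => W (C - V i)) ∧
      ∀ ρ : Fin N → ℝ, (∀ i, ρ i ∈ Ioo 0 α) →
        Hmap N Δx Δt V m1 m2 U' 1 ρ = ρ →
        Δx * ∑ i, ρ i = M →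
        ρ = fun i => W (C - V i)) := by
  have i₀ : Fin N := ⟨0, by omega⟩
  have : Nonempty (Fin N) := ⟨i₀⟩
  have hΔx_card : Δx * Fintype.card (Fin N) = 1 := by
    rw [hΔx, Fintype.card_fin]; field_simp
  have hΔx_pos : 0 < Δx := by rw [hΔx]; positivity
  have hWmono := hU'_smono.strictMono_of_leftInverse (fun y => (hW y).1) (fun y => (hW y).2)
  have hWU := hU'_smono.leftInvOn_of_leftInverse (fun y => (hW y).1) (fun y => (hW y).2)
  have hrange : range W = Ioo 0 α :=
    Subset.antisymm (range_subset_iff.2 fun y => (hW y).1) fun t ht => ⟨U' t, hWU ht⟩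
  have hWcont := hWmono.monotone.continuous_of_isOpen_range (hrange ▸ isOpen_Ioo)
  refine ⟨existsUnique_mul_sum_sub_eq hWmono hWcont hΔx_card V (hrange ▸ hM),
    fun C hC => ⟨Hmap_eq_self_of_forall_add_eq C fun i => by rw [(hW _).2]; ring,
      fun ρ hρ hfix hmass => ?_⟩⟩
  have hρ_eq : ∀ i, ρ i = W (U' (ρ i₀) + V i₀ - V i) := fun i => by
    rw [← add_eq_add_of_Hmap_eq_self one_ne_zero hΔt.ne' hΔx_pos.ne'
      (fun i => hm1_pos _ (Ioo_subset_Ioc_self (hρ i)))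
      (fun i => hm2_pos _ (Ioo_subset_Ico_self (hρ i))) hfix i i₀, add_sub_cancel_right,
      hWU (hρ i)]
  have hC' : Δx * ∑ i, W (U' (ρ i₀) + V i₀ - V i) = M := by simpa only [← hρ_eq] using hmass
  have hC_eq := (strictMono_mul_sum_sub hWmono hΔx_pos V).injective (hC'.trans hC.symm)
  exact funext fun i => by rw [hρ_eq i, hC_eq]

/-- The discrete steady state ρ^∞_i = (U′)⁻¹(C − V_i): uniqueness of the mass constant
and uniqueness of the fixed point of the scheme in (0,α)^N with prescribed mass. -/
theorem scheme_unique_steady_state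
    (N : ℕ) (hN : 2 ≤ N) (Δx Δt : ℝ) (hΔx : Δx = 1 / N) (hΔt : 0 < Δt)
    (α : ℝ) (hα : 0 < α) (V : Fin N → ℝ)
    (m1 m2 : ℝ → ℝ)
    (hm1_cont : ContinuousOn m1 (Icc 0 α)) (hm1_mono : MonotoneOn m1 (Icc 0 α))
    (hm10 : m1 0 = 0) (hm1_pos : ∀ s ∈ Ioc 0 α, 0 < m1 s)
    (hm1_nonneg : ∀ s ∈ Icc 0 α, 0 ≤ m1 s)
    (hm2_cont : ContinuousOn m2 (Icc 0 α)) (hm2_anti : AntitoneOn m2 (Icc 0 α))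
    (hm2α : m2 α = 0) (hm2_pos : ∀ s ∈ Ico 0 α, 0 < m2 s)
    (hm2_nonneg : ∀ s ∈ Icc 0 α, 0 ≤ m2 s)
    (U' : ℝ → ℝ) (hU'_smono : StrictMonoOn U' (Ioo 0 α))
    (W : ℝ → ℝ) (hW : ∀ y : ℝ, W y ∈ Ioo 0 α ∧ U' (W y) = y)
    (M : ℝ) (hM : M ∈ Ioo 0 α) :
    (∃! C : ℝ, Δx * ∑ i, W (C - V i) = M) ∧
    (∀ C : ℝ, Δx * ∑ i, W (C - V i) = M →
      (Hmap N Δx Δt V m1 m2 U' 1 (fun i => W (C - V i)) = fun i => W (C - V i)) ∧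
      ∀ ρ : Fin N → ℝ, (∀ i, ρ i ∈ Ioo 0 α) →
        Hmap N Δx Δt V m1 m2 U' 1 ρ = ρ →
        Δx * ∑ i, ρ i = M →
        ρ = fun i => W (C - V i)) :=
  scheme_unique_steady_state_general N hN Δx Δt hΔx hΔt α V m1 m2 hm1_pos hm2_pos U' hU'_smono W hW
    M hM
end

section
/- Assume U : [0,α] → ℝ is convex and continuously differentiable on [0,α] with derivative U′ strictly increasing on (0,α), and that m¹, m² : [0,α] → [0,∞) satisfy m¹(0) = 0 and m²(α) = 0. For C ∈ ℝ define ρ ∈ [0,α]^N by ρ_i = 0 if C − V_i ≤ U′(0), ρ_i = (U′)⁻¹(C − V_i) if U′(0) < C − V_i < U′(α), and ρ_i = α if C − V_i ≥ U′(α). Then F_{i+1/2}(ρ) = 0 for all 1 ≤ i ≤ N−1; in particular H(λ,ρ) = ρ for every λ ≥ 0, i.e., the truncated profile T_{0,α}∘(U′)⁻¹(C − V_i) is a constant-in-time solution of the implicit finite-volume scheme. -/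
open Set Finset

/-! The profile satisfies ξ_i = C wherever 0 < ρ_i < α, ξ_i ≥ C where ρ_i = 0 and ξ_i ≤ C where
ρ_i = α. Hence whenever ξ strictly decreases from a cell i to a cell j, the cell i is empty or the
cell j is saturated, so the mobility m¹(ρ_i) m²(ρ_j) carried by the upwind flux in that direction
vanishes. Every numerical flux is therefore zero and ρ is a fixed point of H(λ, ·). -/

def IsTruncatedLevel (α C ρ ξ : ℝ) : Prop :=
  (ρ = 0 ∧ C ≤ ξ) ∨ (ρ = α ∧ ξ ≤ C) ∨ ξ = C

theorem isTruncatedLevel_of_profile {α C v ρ : ℝ} {U' : ℝ → ℝ}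
    (h : (C - v ≤ U' 0 → ρ = 0) ∧
      (U' 0 < C - v → C - v < U' α → ρ ∈ Ioo 0 α ∧ U' ρ = C - v) ∧
      (U' α ≤ C - v → ρ = α)) :
    IsTruncatedLevel α C ρ (U' ρ + v) := by
  obtain ⟨hlow, hmid, hhigh⟩ := h
  rcases le_or_gt (C - v) (U' 0) with hle | hgt
  · exact Or.inl ⟨hlow hle, by rw [hlow hle]; linarith⟩
  rcases lt_or_ge (C - v) (U' α) with hlt | hge
  · exact Or.inr (Or.inr (by linarith [(hmid hgt hlt).2]))
  · exact Or.inr (Or.inl ⟨hhigh hge, by rw [hhigh hge]; linarith⟩)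

theorem IsTruncatedLevel.eq_zero_or_eq_of_lt {α C ρ ξ ρ' ξ' : ℝ} (h : IsTruncatedLevel α C ρ ξ)
    (h' : IsTruncatedLevel α C ρ' ξ') (hlt : ξ' < ξ) : ρ = 0 ∨ ρ' = α := by
  rcases h with ⟨hρ, -⟩ | ⟨-, hξ⟩ | hξ
  · exact Or.inl hρ
  all_goals
    rcases h' with ⟨-, hξ'⟩ | ⟨hρ', -⟩ | hξ'
    · linarith
    · exact Or.inr hρ'
    · linarith

theorem upwind_eq_zero {a b v : ℝ} (ha : 0 < v → a = 0) (hb : v < 0 → b = 0) :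
    a * max v 0 + b * min v 0 = 0 := by
  rcases lt_trichotomy v 0 with hv | rfl | hv
  · simp [hb hv, max_eq_right hv.le]
  · simp
  · simp [ha hv, min_eq_right hv.le]

section Scheme

variable {N : ℕ} {Δx : ℝ} {V : Fin N → ℝ} {m1 m2 U' : ℝ → ℝ} {ρ : Fin N → ℝ}

theorem lt_of_vel_pos (hΔx : 0 ≤ Δx) {k : ℕ} (h : k + 1 < N) (hv : 0 < vel N Δx V U' ρ k) :
    U' (ρ ⟨k + 1, h⟩) + V ⟨k + 1, h⟩ < U' (ρ ⟨k, k.lt_of_succ_lt h⟩) + V ⟨k, k.lt_of_succ_lt h⟩ := by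
  rw [vel, dif_pos h] at hv
  by_contra! hle
  linarith [div_nonneg (sub_nonneg.2 hle) hΔx]

theorem lt_of_vel_neg (hΔx : 0 ≤ Δx) {k : ℕ} (h : k + 1 < N) (hv : vel N Δx V U' ρ k < 0) :
    U' (ρ ⟨k, k.lt_of_succ_lt h⟩) + V ⟨k, k.lt_of_succ_lt h⟩ < U' (ρ ⟨k + 1, h⟩) + V ⟨k + 1, h⟩ := by
  rw [vel, dif_pos h] at hv
  by_contra! hle
  linarith [div_nonpos_of_nonpos_of_nonneg (sub_nonpos.2 hle) hΔx]

theorem numFlux_eq_zero_of_mobility_eq_zero (hΔx : 0 ≤ Δx)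
    (hmob : ∀ i j : Fin N, U' (ρ j) + V j < U' (ρ i) + V i → m1 (ρ i) * m2 (ρ j) = 0) (k : ℕ) :
    numFlux N Δx V m1 m2 U' ρ k = 0 := by
  rw [numFlux]
  split_ifs with h
  · exact upwind_eq_zero (fun hv => hmob _ _ (lt_of_vel_pos hΔx h hv))
      (fun hv => hmob _ _ (lt_of_vel_neg hΔx h hv))
  · rfl

theorem Hmap_eq_self_of_numFlux_eq_zero {Δt lam : ℝ}
    (hflux : ∀ k, numFlux N Δx V m1 m2 U' ρ k = 0) : Hmap N Δx Δt V m1 m2 U' lam ρ = ρ := by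
  funext i
  simp [Hmap, hflux]

end Scheme

theorem scheme_truncated_profile_stationary_general
    (N : ℕ) (Δx Δt : ℝ) (hΔx : Δx = 1 / N)
    (α : ℝ) (V : Fin N → ℝ)
    (U' : ℝ → ℝ)
    (m1 m2 : ℝ → ℝ)
    (hm10 : m1 0 = 0)
    (hm2α : m2 α = 0)
    (C : ℝ) (ρ : Fin N → ℝ)
    (hρ : ∀ i : Fin N,
      (C - V i ≤ U' 0 → ρ i = 0) ∧
      (U' 0 < C - V i → C - V i < U' α → ρ i ∈ Ioo 0 α ∧ U' (ρ i) = C - V i) ∧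
      (U' α ≤ C - V i → ρ i = α)) :
    (∀ k : ℕ, numFlux N Δx V m1 m2 U' ρ k = 0) ∧
    (∀ lam : ℝ, 0 ≤ lam → Hmap N Δx Δt V m1 m2 U' lam ρ = ρ) := by
  have hΔx₀ : 0 ≤ Δx := hΔx ▸ by positivity
  have hlevel (i : Fin N) : IsTruncatedLevel α C (ρ i) (U' (ρ i) + V i) :=
    isTruncatedLevel_of_profile (hρ i)
  have hflux := numFlux_eq_zero_of_mobility_eq_zero (m1 := m1) (m2 := m2) hΔx₀ fun i j hlt => by
    rcases (hlevel i).eq_zero_or_eq_of_lt (hlevel j) hlt with h | h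
    · rw [h, hm10, zero_mul]
    · rw [h, hm2α, mul_zero]
  exact ⟨hflux, fun _ _ => Hmap_eq_self_of_numFlux_eq_zero hflux⟩

/-- The truncated profile T_{0,α}∘(U′)⁻¹(C − V_i) has vanishing numerical fluxes and is
a constant-in-time solution of the implicit finite-volume scheme. -/
theorem scheme_truncated_profile_stationary
    (N : ℕ) (hN : 2 ≤ N) (Δx Δt : ℝ) (hΔx : Δx = 1 / N) (hΔt : 0 < Δt)
    (α : ℝ) (hα : 0 < α) (V : Fin N → ℝ)
    (U U' : ℝ → ℝ) (hU_conv : ConvexOn ℝ (Icc 0 α) U)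
    (hU_deriv : ∀ s ∈ Icc 0 α, HasDerivWithinAt U (U' s) (Icc 0 α) s)
    (hU'_cont : ContinuousOn U' (Icc 0 α))
    (hU'_smono : StrictMonoOn U' (Ioo 0 α))
    (m1 m2 : ℝ → ℝ)
    (hm1_nonneg : ∀ s ∈ Icc 0 α, 0 ≤ m1 s) (hm10 : m1 0 = 0)
    (hm2_nonneg : ∀ s ∈ Icc 0 α, 0 ≤ m2 s) (hm2α : m2 α = 0)
    (C : ℝ) (ρ : Fin N → ℝ)
    (hρ : ∀ i : Fin N,
      (C - V i ≤ U' 0 → ρ i = 0) ∧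
      (U' 0 < C - V i → C - V i < U' α → ρ i ∈ Ioo 0 α ∧ U' (ρ i) = C - V i) ∧
      (U' α ≤ C - V i → ρ i = α)) :
    (∀ k : ℕ, numFlux N Δx V m1 m2 U' ρ k = 0) ∧
    (∀ lam : ℝ, 0 ≤ lam → Hmap N Δx Δt V m1 m2 U' lam ρ = ρ) :=
  scheme_truncated_profile_stationary_general N Δx Δt hΔx α V U' m1 m2 hm10 hm2α C ρ hρ
end
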